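/- Existence and covering-independence of the local fidelity order parameter: let ι be a type, d ≥ 1, and suppose that to every finite subset A of ι there is assigned a positive semidefinite trace-one complex matrix ρ_A indexed by functions A → Fin d, consistently under partial trace: for all finite A ⊆ B, (ρ_A)_{f,f'} = Σ_{g : (B∖A) → Fin d} (ρ_B)_{f⊔g, f'⊔g}, where f⊔g denotes the function on B restricting to f on A and to g on B∖A. Fix a finite subset S ⊆ ι and a matrix O indexed by functions S → Fin d; for a finite A ⊇ S, let O_A denote the matrix on functions A → Fin d acting as O on the S-coordinates and as the identity on the (A∖S)-coordinates. Then for every increasing sequence (A_n) of finite subsets of ι with S ⊆ A₀ and ⋃_n A_n = ι, the sequence F(ρ_{A_n}, O_{A_n} ρ_{A_n} O_{A_n}†) converges, and its limit equals the infimum of F(ρ_A, O_A ρ_A O_A†) over all finite subsets A with S ⊆ A ⊆ ι; in particular the limit is the same for every such exhausting increasing sequence. -/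

import Mathlib

noncomputable section

open scoped Matrix Kronecker ComplexOrder

/-- The positive semidefinite square root of a matrix (defaults to `0` if not PSD). -/
noncomputable def matSqrt {n : Type*} [Fintype n] [DecidableEq n] (M : Matrix n n ℂ) :
    Matrix n n ℂ :=
  open scoped Classical in
  if h : M.PosSemidef then
    (h.1.eigenvectorUnitary : Matrix n n ℂ) * Matrix.diagonal ((↑) ∘ Real.sqrt ∘ h.1.eigenvalues) *
      (star h.1.eigenvectorUnitary : Matrix n n ℂ)
  else 0

/-- The fidelity `F(ρ, σ) = tr √(√ρ σ √ρ)` of two PSD matrices. -/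
noncomputable def fidelity {n : Type*} [Fintype n] [DecidableEq n] (ρ σ : Matrix n n ℂ) : ℝ :=
  (matSqrt (matSqrt ρ * σ * matSqrt ρ)).trace.re

/-- The ℓ²→ℓ² operator norm of a complex matrix. -/
noncomputable def opNorm {m n : Type*} [Fintype m] [Fintype n] [DecidableEq n]
    (M : Matrix m n ℂ) : ℝ :=
  ‖(Matrix.toEuclideanLin.trans LinearMap.toContinuousLinearMap) M‖

/-- Partial trace over the second tensor factor. -/
noncomputable def ptraceB {A B : Type*} [Fintype B]
    (ρ : Matrix (A × B) (A × B) ℂ) : Matrix A A ℂ :=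
  Matrix.of fun a a' => ∑ b : B, ρ (a, b) (a', b)


/-- Glue a configuration on `A` with a configuration on `B \ A` to one on `B ⊇ A`. -/
def glue {ι : Type*} [DecidableEq ι] {d : ℕ} {A B : Finset ι} (h : A ⊆ B)
    (f : ↥A → Fin d) (g : ↥(B \ A) → Fin d) : ↥B → Fin d :=
  fun b => if hb : (b : ι) ∈ A then f ⟨b, hb⟩
    else g ⟨b, Finset.mem_sdiff.mpr ⟨b.2, hb⟩⟩

/-- Extend an operator supported on `S` to a region `A ⊇ S`, acting as the identity on the
remaining coordinates (junk value `0` if `S ⊄ A`). -/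
noncomputable def extendOp {ι : Type*} [DecidableEq ι] {d : ℕ} (S : Finset ι)
    (O : Matrix (↥S → Fin d) (↥S → Fin d) ℂ) (A : Finset ι) :
    Matrix (↥A → Fin d) (↥A → Fin d) ℂ :=
  open scoped Classical in
  if h : S ⊆ A then
    Matrix.of fun f f' =>
      O (fun s => f ⟨s, h s.2⟩) (fun s => f' ⟨s, h s.2⟩) *
        (if ∀ a : ↥A, (a : ι) ∉ S → f a = f' a then 1 else 0)
  else 0

/-!
Uhlmann's theorem, in the form used here: `F(ρ, σ) ≥ Re tr (Y Xᴴ)` whenever `ρ = X Xᴴ` and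
`σ = Y Yᴴ`, with equality for suitable `X`, `Y` (both halves come from polar decompositions
`X = √(X Xᴴ) K` with `‖K‖ ≤ 1`). Factorizations of operators on `A × C` reshape into
factorizations of their partial traces with the same overlap, so fidelity can only grow under
the partial trace. For regions `S ⊆ A ⊆ B`, after reindexing `B`-configurations as pairs
(`A`-configuration, `B \ A`-configuration), `O_B = O_A ⊗ 1` and `ρ_A` is the partial trace of
`ρ_B`; hence `A ↦ F(ρ_A, O_A ρ_A O_Aᴴ)` is antitone. Along an exhausting chain it therefore
decreases to its infimum over all finite regions containing `S`, since every finite region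
lies in some `A n`.
-/

open Matrix
open scoped Matrix.Norms.L2Operator

namespace LocalFidelity

section MatSqrt

open scoped MatrixOrder

variable {n m : Type*} [Fintype n] [DecidableEq n]

lemma matSqrt_eq_cfcSqrt {M : Matrix n n ℂ} (hM : M.PosSemidef) : matSqrt M = CFC.sqrt M := by
  rw [CFC.sqrt_eq_real_sqrt M hM.nonneg, cfcₙ_eq_cfc (hf0 := Real.sqrt_zero), hM.1.cfc_eq,
    matSqrt, dif_pos hM]
  simp [Matrix.IsHermitian.cfc, Unitary.conjStarAlgAut_apply]

lemma posSemidef_matSqrt (M : Matrix n n ℂ) : (matSqrt M).PosSemidef := by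
  by_cases hM : M.PosSemidef
  · rw [matSqrt_eq_cfcSqrt hM]
    exact (CFC.sqrt_nonneg M).posSemidef
  · rw [matSqrt, dif_neg hM]
    exact .zero

lemma matSqrt_mul_self {M : Matrix n n ℂ} (hM : M.PosSemidef) : matSqrt M * matSqrt M = M := by
  rw [matSqrt_eq_cfcSqrt hM]
  exact CFC.sqrt_mul_sqrt_self M hM.nonneg

lemma conjTranspose_matSqrt (M : Matrix n n ℂ) : (matSqrt M)ᴴ = matSqrt M :=
  (posSemidef_matSqrt M).isHermitian

variable [Fintype m] [DecidableEq m]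

lemma matSqrt_submatrix (M : Matrix n n ℂ) (e : m ≃ n) :
    matSqrt (M.submatrix e e) = (matSqrt M).submatrix e e := by
  by_cases hM : M.PosSemidef
  · rw [matSqrt_eq_cfcSqrt (hM.submatrix e)]
    exact CFC.sqrt_unique (by rw [submatrix_mul_equiv, matSqrt_mul_self hM])
      ((posSemidef_matSqrt M).submatrix e).nonneg
  · have hMe : ¬ (M.submatrix e e).PosSemidef := fun h => hM ((posSemidef_submatrix_equiv e).mp h)
    rw [matSqrt, matSqrt, dif_neg hM, dif_neg hMe, submatrix_zero]
    rfl

end MatSqrt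

section Fidelity

variable {n m : Type*} [Fintype n] [DecidableEq n] [Fintype m] [DecidableEq m]

lemma fidelity_nonneg (ρ σ : Matrix n n ℂ) : 0 ≤ fidelity ρ σ :=
  (Complex.nonneg_iff.mp (posSemidef_matSqrt _).trace_nonneg).1

lemma fidelity_submatrix (ρ σ : Matrix n n ℂ) (e : m ≃ n) :
    fidelity (ρ.submatrix e e) (σ.submatrix e e) = fidelity ρ σ := by
  rw [fidelity, fidelity, matSqrt_submatrix, submatrix_mul_equiv, submatrix_mul_equiv,
    matSqrt_submatrix, trace, trace]
  congr 1
  exact Fintype.sum_equiv e _ _ fun _ => rfl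

lemma fidelity_eq_re_trace_matSqrt (ρ : Matrix n n ℂ) {σ : Matrix n n ℂ} (hσ : σ.PosSemidef) :
    fidelity ρ σ = (matSqrt (matSqrt ρ * matSqrt σ * (matSqrt ρ * matSqrt σ)ᴴ)).trace.re := by
  rw [fidelity, conjTranspose_mul, conjTranspose_matSqrt, conjTranspose_matSqrt]
  simp only [Matrix.mul_assoc]
  rw [← Matrix.mul_assoc (matSqrt σ), matSqrt_mul_self hσ]

end Fidelity

section IsometricFactorization

variable {𝕜 R E F G : Type*}

lemma exists_linearIsometry_range_of_norm_eq [Ring R] [AddCommGroup E] [Module R E]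
    [SeminormedAddCommGroup F] [Module R F] [NormedAddCommGroup G] [Module R G]
    (p : E →ₗ[R] F) (q : E →ₗ[R] G) (h : ∀ x, ‖q x‖ = ‖p x‖) :
    ∃ L : LinearMap.range p →ₗᵢ[R] G, ∀ x, L ⟨p x, LinearMap.mem_range_self p x⟩ = q x := by
  have hker : LinearMap.ker p ≤ LinearMap.ker q := fun x hx => by
    rw [LinearMap.mem_ker, ← norm_eq_zero, h, LinearMap.mem_ker.mp hx, norm_zero]
  let L : LinearMap.range p →ₗ[R] G :=
    (LinearMap.ker p).liftQ q hker ∘ₗ (LinearMap.quotKerEquivRange p).symm.toLinearMap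
  have hL : ∀ x, L ⟨p x, LinearMap.mem_range_self p x⟩ = q x := fun x => by
    have hx : (LinearMap.quotKerEquivRange p).symm ⟨p x, LinearMap.mem_range_self p x⟩
        = Submodule.Quotient.mk x := by
      rw [LinearEquiv.symm_apply_eq]
      rfl
    simp only [L, LinearMap.comp_apply, LinearEquiv.coe_toLinearMap, hx]
    rfl
  refine ⟨⟨L, ?_⟩, hL⟩
  rintro ⟨_, x, rfl⟩
  exact (congrArg norm (hL x)).trans (h x)

variable [RCLike 𝕜] [AddCommGroup E] [Module 𝕜 E] [NormedAddCommGroup F] [InnerProductSpace 𝕜 F]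
  [FiniteDimensional 𝕜 F]

lemma exists_contraction_comp_eq_of_norm_eq [NormedAddCommGroup G] [InnerProductSpace 𝕜 G]
    (p : E →ₗ[𝕜] F) (q : E →ₗ[𝕜] G) (h : ∀ x, ‖q x‖ = ‖p x‖) :
    ∃ T : F →L[𝕜] G, ‖T‖ ≤ 1 ∧ ∀ x, T (p x) = q x := by
  obtain ⟨L, hL⟩ := exists_linearIsometry_range_of_norm_eq p q h
  let π := (LinearMap.range p).orthogonalProjectionOnto
  refine ⟨L.toContinuousLinearMap.comp π, ?_, fun x => ?_⟩
  · exact (ContinuousLinearMap.opNorm_comp_le _ _).trans <| mul_le_one₀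
      L.norm_toContinuousLinearMap_le (norm_nonneg _) (Submodule.orthogonalProjectionOnto_norm_le _)
  · rw [ContinuousLinearMap.comp_apply, Submodule.orthogonalProjectionOnto_mem_subspace_eq_self
      ⟨p x, LinearMap.mem_range_self p x⟩]
    exact hL x

lemma exists_linearIsometryEquiv_comp_eq_of_norm_eq (p q : E →ₗ[𝕜] F) (h : ∀ x, ‖q x‖ = ‖p x‖) :
    ∃ e : F ≃ₗᵢ[𝕜] F, ∀ x, e (p x) = q x := by
  obtain ⟨L, hL⟩ := exists_linearIsometry_range_of_norm_eq p q h
  refine ⟨L.extend.toLinearIsometryEquiv rfl, fun x => ?_⟩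
  exact (LinearIsometry.extend_apply L ⟨p x, LinearMap.mem_range_self p x⟩).trans (hL x)

end IsometricFactorization

section MatrixFactorization

variable {𝕜 m n k : Type*} [RCLike 𝕜] [Fintype m] [DecidableEq m] [Fintype n] [DecidableEq n]
  [Fintype k] [DecidableEq k]

lemma norm_toEuclideanLin_sq (M : Matrix m n 𝕜) (x : EuclideanSpace 𝕜 n) :
    ‖toEuclideanLin M x‖ ^ 2 = RCLike.re (inner 𝕜 x (toEuclideanLin (Mᴴ * M) x)) := by
  rw [← inner_self_eq_norm_sq (𝕜 := 𝕜), toLpLin_mul_same, LinearMap.comp_apply,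
    toEuclideanLin_conjTranspose_eq_adjoint, LinearMap.adjoint_inner_right]

lemma norm_toEuclideanLin_eq_of_conjTranspose_mul_self_eq {N : Matrix m n 𝕜} {P : Matrix k n 𝕜}
    (h : Nᴴ * N = Pᴴ * P) (x : EuclideanSpace 𝕜 n) :
    ‖toEuclideanLin N x‖ = ‖toEuclideanLin P x‖ := by
  rw [← sq_eq_sq₀ (norm_nonneg _) (norm_nonneg _), norm_toEuclideanLin_sq,
    norm_toEuclideanLin_sq, h]

lemma exists_contraction_mul_eq_of_conjTranspose_mul_self_eq {N : Matrix m n 𝕜}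
    {P : Matrix k n 𝕜} (h : Nᴴ * N = Pᴴ * P) : ∃ U : Matrix m k 𝕜, ‖U‖ ≤ 1 ∧ N = U * P := by
  obtain ⟨T, hT, hTP⟩ := exists_contraction_comp_eq_of_norm_eq (toEuclideanLin P)
    (toEuclideanLin N) (norm_toEuclideanLin_eq_of_conjTranspose_mul_self_eq h)
  let toCLM := (toEuclideanLin (𝕜 := 𝕜) (m := m) (n := k)).trans LinearMap.toContinuousLinearMap
  let U := toCLM.symm T
  have hU : toEuclideanLin U = T :=
    congrArg ContinuousLinearMap.toLinearMap (toCLM.apply_symm_apply T)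
  refine ⟨U, by rwa [l2_opNorm_def, LinearEquiv.apply_symm_apply], toEuclideanLin.injective ?_⟩
  ext1 x
  rw [toLpLin_mul_same, LinearMap.comp_apply, hU]
  exact (hTP x).symm

lemma exists_unitary_mul_eq_of_conjTranspose_mul_self_eq {N P : Matrix n n 𝕜}
    (h : Nᴴ * N = Pᴴ * P) : ∃ W ∈ unitary (Matrix n n 𝕜), N = W * P := by
  obtain ⟨e, he⟩ := exists_linearIsometryEquiv_comp_eq_of_norm_eq (toEuclideanLin P)
    (toEuclideanLin N) (norm_toEuclideanLin_eq_of_conjTranspose_mul_self_eq h)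
  let toCLM := toEuclideanCLM (n := n) (𝕜 := 𝕜)
  refine ⟨toCLM.symm (e : EuclideanSpace 𝕜 n →L[𝕜] EuclideanSpace 𝕜 n), ?_,
    EquivLike.injective toCLM ?_⟩
  · rw [← Unitary.coe_symm_linearIsometryEquiv_apply]
    exact Unitary.map_mem _ (Subtype.prop _)
  · rw [map_mul, StarAlgEquiv.apply_symm_apply]
    ext1 x
    exact (he x).symm

end MatrixFactorization

section Polar

variable {m n : Type*} [Fintype m] [Fintype n] [DecidableEq n]

lemma exists_contraction_eq_matSqrt_mul [DecidableEq m] (X : Matrix n m ℂ) :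
    ∃ K : Matrix n m ℂ, ‖K‖ ≤ 1 ∧ X = matSqrt (X * Xᴴ) * K := by
  have hgram : (Xᴴ)ᴴ * Xᴴ = (matSqrt (X * Xᴴ))ᴴ * matSqrt (X * Xᴴ) := by
    rw [conjTranspose_conjTranspose, conjTranspose_matSqrt,
      matSqrt_mul_self (posSemidef_self_mul_conjTranspose X)]
  obtain ⟨U, hU, hXU⟩ := exists_contraction_mul_eq_of_conjTranspose_mul_self_eq hgram
  refine ⟨Uᴴ, by rwa [l2_opNorm_conjTranspose], ?_⟩
  conv_lhs => rw [← conjTranspose_conjTranspose X, hXU]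
  rw [conjTranspose_mul, conjTranspose_matSqrt]

lemma exists_unitary_eq_matSqrt_mul (X : Matrix n n ℂ) :
    ∃ W ∈ unitary (Matrix n n ℂ), X = matSqrt (X * Xᴴ) * W := by
  have hgram : (Xᴴ)ᴴ * Xᴴ = (matSqrt (X * Xᴴ))ᴴ * matSqrt (X * Xᴴ) := by
    rw [conjTranspose_conjTranspose, conjTranspose_matSqrt,
      matSqrt_mul_self (posSemidef_self_mul_conjTranspose X)]
  obtain ⟨W, hW, hXW⟩ := exists_unitary_mul_eq_of_conjTranspose_mul_self_eq hgram
  refine ⟨star W, Unitary.star_mem hW, ?_⟩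
  conv_lhs => rw [← conjTranspose_conjTranspose X, hXW]
  rw [conjTranspose_mul, conjTranspose_matSqrt, star_eq_conjTranspose]

end Polar

section TraceInequality

variable {𝕜 m n : Type*} [RCLike 𝕜] [Fintype n] [DecidableEq n]

lemma conjTranspose_mul_mul_apply_self (R : Matrix n m 𝕜) (Q : Matrix n n 𝕜) (i : m) :
    (Rᴴ * Q * R) i i
      = inner 𝕜 (WithLp.toLp 2 fun j => R j i)
          (toEuclideanLin Q (WithLp.toLp 2 fun j => R j i)) := by
  rw [Matrix.mul_assoc, mul_apply, EuclideanSpace.inner_eq_star_dotProduct, dotProduct_comm]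
  simp only [dotProduct, mul_apply, conjTranspose_apply]
  rfl

lemma re_conjTranspose_mul_mul_apply_self_le {Q : Matrix n n 𝕜} (hQ : ‖Q‖ ≤ 1)
    (R : Matrix n m 𝕜) (i : m) : RCLike.re ((Rᴴ * Q * R) i i) ≤ RCLike.re ((Rᴴ * R) i i) := by
  set v : EuclideanSpace 𝕜 n := WithLp.toLp 2 fun j => R j i
  have hQv : ‖toEuclideanLin Q v‖ ≤ ‖Q‖ * ‖v‖ := l2_opNorm_mulVec Q v
  rw [← Matrix.mul_one Rᴴ, conjTranspose_mul_mul_apply_self, Matrix.mul_one,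
    conjTranspose_mul_mul_apply_self, toLpLin_one, LinearMap.id_apply, inner_self_eq_norm_sq]
  calc RCLike.re (inner 𝕜 v (toEuclideanLin Q v)) ≤ ‖v‖ * ‖toEuclideanLin Q v‖ :=
        (RCLike.re_le_norm _).trans (norm_inner_le_norm _ _)
    _ ≤ ‖v‖ * (1 * ‖v‖) := by gcongr; exact hQv.trans (by gcongr)
    _ = ‖v‖ ^ 2 := by ring

lemma re_trace_mul_le_of_norm_le_one {P Q : Matrix n n ℂ} (hP : P.PosSemidef) (hQ : ‖Q‖ ≤ 1) :
    (Q * P).trace.re ≤ P.trace.re := by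
  obtain ⟨R, rfl⟩ : ∃ R, P = R * Rᴴ :=
    ⟨matSqrt P, by rw [conjTranspose_matSqrt, matSqrt_mul_self hP]⟩
  rw [← Matrix.mul_assoc, trace_mul_comm (Q * R), trace_mul_comm R, ← Matrix.mul_assoc, trace,
    trace, Complex.re_sum, Complex.re_sum]
  exact Finset.sum_le_sum fun i _ => re_conjTranspose_mul_mul_apply_self_le hQ R i

end TraceInequality

section Uhlmann

variable {m n : Type*} [Fintype m] [DecidableEq m] [Fintype n] [DecidableEq n]

theorem re_trace_mul_conjTranspose_le_fidelity (Ψ Φ : Matrix n m ℂ) :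
    (Φ * Ψᴴ).trace.re ≤ fidelity (Ψ * Ψᴴ) (Φ * Φᴴ) := by
  obtain ⟨K, hK, hΨ⟩ := exists_contraction_eq_matSqrt_mul Ψ
  obtain ⟨K', hK', hΦ⟩ := exists_contraction_eq_matSqrt_mul Φ
  set R := matSqrt (Ψ * Ψᴴ)
  set S := matSqrt (Φ * Φᴴ)
  obtain ⟨V, hV, hRS⟩ := exists_contraction_eq_matSqrt_mul (R * S)
  rw [fidelity_eq_re_trace_matSqrt _ (posSemidef_self_mul_conjTranspose Φ)]
  set G := matSqrt (R * S * (R * S)ᴴ)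
  have htrace : (Φ * Ψᴴ).trace = (V * (K' * Kᴴ) * G).trace := by
    calc (Φ * Ψᴴ).trace = (S * (K' * Kᴴ) * R).trace := by
          rw [hΨ, hΦ, conjTranspose_mul, conjTranspose_matSqrt]
          simp only [R, Matrix.mul_assoc]
      _ = (R * S * (K' * Kᴴ)).trace := by rw [trace_mul_comm, Matrix.mul_assoc]
      _ = (V * (K' * Kᴴ) * G).trace := by
          rw [hRS, Matrix.mul_assoc, trace_mul_comm G]
  have hcontr : ‖V * (K' * Kᴴ)‖ ≤ 1 := by
    grw [l2_opNorm_mul, l2_opNorm_mul, l2_opNorm_conjTranspose, hV, hK', hK, one_mul, one_mul]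
  rw [htrace]
  exact re_trace_mul_le_of_norm_le_one (posSemidef_matSqrt _) hcontr

theorem exists_re_trace_mul_conjTranspose_eq_fidelity {ρ σ : Matrix n n ℂ} (hρ : ρ.PosSemidef)
    (hσ : σ.PosSemidef) :
    ∃ X Y : Matrix n n ℂ, X * Xᴴ = ρ ∧ Y * Yᴴ = σ ∧ (Y * Xᴴ).trace.re = fidelity ρ σ := by
  set R := matSqrt ρ
  set S := matSqrt σ
  obtain ⟨W, hW, hRS⟩ := exists_unitary_eq_matSqrt_mul (R * S)
  have hWW : Wᴴ * W = 1 := Unitary.star_mul_self_of_mem hW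
  have hWW' : W * Wᴴ = 1 := Unitary.mul_star_self_of_mem hW
  refine ⟨R, S * Wᴴ, ?_, ?_, ?_⟩
  · rw [conjTranspose_matSqrt, matSqrt_mul_self hρ]
  · rw [conjTranspose_mul, conjTranspose_conjTranspose, conjTranspose_matSqrt, Matrix.mul_assoc,
      ← Matrix.mul_assoc Wᴴ, hWW, Matrix.one_mul, matSqrt_mul_self hσ]
  · rw [fidelity_eq_re_trace_matSqrt _ hσ, conjTranspose_matSqrt, trace_mul_comm,
      ← Matrix.mul_assoc]
    conv_lhs => rw [hRS, Matrix.mul_assoc, hWW', Matrix.mul_one]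

end Uhlmann

section PartialTrace

variable {n c : Type*} [Fintype n] [DecidableEq n] [Fintype c] [DecidableEq c]

omit [DecidableEq n] [DecidableEq c] in
lemma trace_ptraceB (M : Matrix (n × c) (n × c) ℂ) : (ptraceB M).trace = M.trace := by
  simp [ptraceB, trace, Fintype.sum_prod_type]

def ptraceBFactor (X : Matrix (n × c) (n × c) ℂ) : Matrix n (c × (n × c)) ℂ :=
  Matrix.of fun a p => X (a, p.1) p.2

omit [DecidableEq n] [DecidableEq c] in
lemma ptraceBFactor_mul_conjTranspose (X Y : Matrix (n × c) (n × c) ℂ) :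
    ptraceBFactor X * (ptraceBFactor Y)ᴴ = ptraceB (X * Yᴴ) := by
  ext a a'
  simp [ptraceBFactor, ptraceB, mul_apply, Fintype.sum_prod_type]

theorem fidelity_le_fidelity_ptraceB {ρ σ : Matrix (n × c) (n × c) ℂ} (hρ : ρ.PosSemidef)
    (hσ : σ.PosSemidef) : fidelity ρ σ ≤ fidelity (ptraceB ρ) (ptraceB σ) := by
  obtain ⟨X, Y, rfl, rfl, hXY⟩ := exists_re_trace_mul_conjTranspose_eq_fidelity hρ hσ
  rw [← hXY, ← trace_ptraceB, ← ptraceBFactor_mul_conjTranspose,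
    ← ptraceBFactor_mul_conjTranspose, ← ptraceBFactor_mul_conjTranspose]
  exact re_trace_mul_conjTranspose_le_fidelity _ _

omit [DecidableEq n] in
lemma ptraceB_kronecker_one_mul (M : Matrix n n ℂ) (τ : Matrix (n × c) (n × c) ℂ) :
    ptraceB ((M ⊗ₖ (1 : Matrix c c ℂ)) * τ) = M * ptraceB τ := by
  ext a a'
  simp only [ptraceB, of_apply, mul_apply, Fintype.sum_prod_type, kronecker_apply, one_apply,
    mul_ite, ite_mul, mul_one, mul_zero, zero_mul, Finset.sum_ite_eq, Finset.mem_univ, if_true,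
    Finset.mul_sum]
  exact Finset.sum_comm

omit [DecidableEq n] in
lemma ptraceB_mul_kronecker_one (τ : Matrix (n × c) (n × c) ℂ) (M : Matrix n n ℂ) :
    ptraceB (τ * (M ⊗ₖ (1 : Matrix c c ℂ))) = ptraceB τ * M := by
  ext a a'
  simp only [ptraceB, of_apply, mul_apply, Fintype.sum_prod_type, kronecker_apply, one_apply,
    mul_ite, mul_one, mul_zero, Finset.sum_ite_eq', Finset.mem_univ, if_true, Finset.sum_mul]
  exact Finset.sum_comm

theorem fidelity_kronecker_one_conj_le {τ : Matrix (n × c) (n × c) ℂ} (hτ : τ.PosSemidef)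
    (M : Matrix n n ℂ) :
    fidelity τ ((M ⊗ₖ (1 : Matrix c c ℂ)) * τ * (M ⊗ₖ (1 : Matrix c c ℂ))ᴴ)
      ≤ fidelity (ptraceB τ) (M * ptraceB τ * Mᴴ) := by
  have h := fidelity_le_fidelity_ptraceB hτ
    (hτ.mul_mul_conjTranspose_same (M ⊗ₖ (1 : Matrix c c ℂ)))
  rw [conjTranspose_kronecker, conjTranspose_one] at h ⊢
  rwa [ptraceB_mul_kronecker_one, ptraceB_kronecker_one_mul] at h

end PartialTrace

section Regions

variable {ι : Type*} [DecidableEq ι] {d : ℕ}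

def glueEquiv {A B : Finset ι} (h : A ⊆ B) :
    ((↥A → Fin d) × (↥(B \ A) → Fin d)) ≃ (↥B → Fin d) where
  toFun p := glue h p.1 p.2
  invFun f := (fun a => f ⟨a, h a.2⟩, fun c => f ⟨c, (Finset.mem_sdiff.mp c.2).1⟩)
  left_inv := by
    rintro ⟨f, g⟩
    ext x
    · exact congrArg _ (dif_pos x.2)
    · exact congrArg _ (dif_neg (Finset.mem_sdiff.mp x.2).2)
  right_inv f := by
    funext b
    by_cases hb : (b : ι) ∈ A
    · exact dif_pos hb
    · exact dif_neg hb

lemma glueEquiv_apply {A B : Finset ι} (h : A ⊆ B) (p : (↥A → Fin d) × (↥(B \ A) → Fin d)) :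
    glueEquiv h p = glue h p.1 p.2 :=
  rfl

lemma glue_of_mem {A B : Finset ι} (h : A ⊆ B) (f : ↥A → Fin d) (g : ↥(B \ A) → Fin d)
    {b : ↥B} (hb : (b : ι) ∈ A) : glue h f g b = f ⟨b, hb⟩ :=
  dif_pos hb

lemma glue_of_not_mem {A B : Finset ι} (h : A ⊆ B) (f : ↥A → Fin d) (g : ↥(B \ A) → Fin d)
    {b : ↥B} (hb : (b : ι) ∉ A) : glue h f g b = g ⟨b, Finset.mem_sdiff.mpr ⟨b.2, hb⟩⟩ :=
  dif_neg hb

lemma glue_eq_glue_off_iff {S A B : Finset ι} (hSA : S ⊆ A) (hAB : A ⊆ B)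
    {f f' : ↥A → Fin d} {g g' : ↥(B \ A) → Fin d} :
    (∀ b : ↥B, (b : ι) ∉ S → glue hAB f g b = glue hAB f' g' b)
      ↔ (∀ a : ↥A, (a : ι) ∉ S → f a = f' a) ∧ g = g' := by
  constructor
  · intro H
    refine ⟨fun a ha => ?_, funext fun c => ?_⟩
    · simpa [glue, a.2] using H ⟨a, hAB a.2⟩ ha
    · obtain ⟨hcB, hcA⟩ := Finset.mem_sdiff.mp c.2
      simpa [glue, hcA] using H ⟨c, hcB⟩ fun hcS => hcA (hSA hcS)
  · rintro ⟨H, rfl⟩ b hbS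
    by_cases hbA : (b : ι) ∈ A
    · rw [glue_of_mem hAB _ _ hbA, glue_of_mem hAB _ _ hbA]
      exact H _ hbS
    · rw [glue_of_not_mem hAB _ _ hbA, glue_of_not_mem hAB _ _ hbA]

lemma extendOp_submatrix_glueEquiv {S A B : Finset ι} (hSA : S ⊆ A) (hAB : A ⊆ B)
    (O : Matrix (↥S → Fin d) (↥S → Fin d) ℂ) :
    (extendOp S O B).submatrix (glueEquiv hAB) (glueEquiv hAB)
      = extendOp S O A ⊗ₖ (1 : Matrix (↥(B \ A) → Fin d) (↥(B \ A) → Fin d) ℂ) := by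
  have hSB := hSA.trans hAB
  have hrestrict : ∀ (f : ↥A → Fin d) (g : ↥(B \ A) → Fin d),
      (fun s : ↥S => glue hAB f g ⟨(s : ι), hSB s.2⟩) = fun s : ↥S => f ⟨(s : ι), hSA s.2⟩ :=
    fun f g => funext fun s => glue_of_mem hAB f g (hSA s.2)
  ext ⟨f, g⟩ ⟨f', g'⟩
  simp only [submatrix_apply, extendOp, dif_pos hSB, dif_pos hSA, of_apply, kronecker_apply,
    one_apply, glueEquiv_apply, hrestrict, glue_eq_glue_off_iff hSA hAB]
  split_ifs <;> simp_all

theorem fidelity_extendOp_conj_le_of_subset {S A B : Finset ι} (hSA : S ⊆ A) (hAB : A ⊆ B)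
    (O : Matrix (↥S → Fin d) (↥S → Fin d) ℂ) {ρA : Matrix (↥A → Fin d) (↥A → Fin d) ℂ}
    {ρB : Matrix (↥B → Fin d) (↥B → Fin d) ℂ} (hρB : ρB.PosSemidef)
    (hcons : ∀ f f', ρA f f' = ∑ g : ↥(B \ A) → Fin d, ρB (glue hAB f g) (glue hAB f' g)) :
    fidelity ρB (extendOp S O B * ρB * (extendOp S O B)ᴴ)
      ≤ fidelity ρA (extendOp S O A * ρA * (extendOp S O A)ᴴ) := by
  set e := glueEquiv (d := d) hAB
  have hρA : ρA = ptraceB (ρB.submatrix e e) := by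
    ext f f'
    exact hcons f f'
  calc fidelity ρB (extendOp S O B * ρB * (extendOp S O B)ᴴ)
      = fidelity (ρB.submatrix e e) ((extendOp S O B * ρB * (extendOp S O B)ᴴ).submatrix e e) :=
        (fidelity_submatrix _ _ e).symm
    _ = fidelity (ρB.submatrix e e)
          ((extendOp S O A ⊗ₖ (1 : Matrix (↥(B \ A) → Fin d) (↥(B \ A) → Fin d) ℂ))
            * ρB.submatrix e e
            * (extendOp S O A ⊗ₖ (1 : Matrix (↥(B \ A) → Fin d) (↥(B \ A) → Fin d) ℂ))ᴴ) := by
        rw [← extendOp_submatrix_glueEquiv hSA hAB, conjTranspose_submatrix, submatrix_mul_equiv,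
          submatrix_mul_equiv]
    _ ≤ fidelity ρA (extendOp S O A * ρA * (extendOp S O A)ᴴ) :=
        hρA ▸ fidelity_kronecker_one_conj_le (hρB.submatrix e) _

end Regions

theorem tendsto_sInf_of_antitone_of_exhausting {ι : Type*} (F : Finset ι → ℝ) {S : Finset ι}
    (hF : ∀ ⦃A B⦄, S ⊆ A → A ⊆ B → F B ≤ F A) (hbdd : BddBelow (Set.range F))
    {A : ℕ → Finset ι} (hA : Monotone A) (hS : S ⊆ A 0) (hexh : ∀ i, ∃ n, i ∈ A n) :
    Filter.Tendsto (fun n => F (A n)) Filter.atTop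
      (nhds (sInf {r : ℝ | ∃ B : Finset ι, S ⊆ B ∧ r = F B})) := by
  have hSA : ∀ n, S ⊆ A n := fun n => hS.trans (hA n.zero_le)
  have hcofinal : ∀ B : Finset ι, ∃ n, B ⊆ A n := by
    choose N hN using hexh
    exact fun B => ⟨B.sup N, fun i hi => hA (Finset.le_sup hi) (hN i)⟩
  have hbddA : BddBelow (Set.range fun n => F (A n)) :=
    hbdd.mono (Set.range_comp_subset_range A F)
  have hbddS : BddBelow {r : ℝ | ∃ B : Finset ι, S ⊆ B ∧ r = F B} :=
    hbdd.mono <| by rintro _ ⟨B, -, rfl⟩; exact ⟨B, rfl⟩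
  have hinf : ⨅ n, F (A n) = sInf {r : ℝ | ∃ B : Finset ι, S ⊆ B ∧ r = F B} := by
    refine le_antisymm (le_csInf ⟨F S, S, subset_rfl, rfl⟩ ?_)
      (le_ciInf fun n => csInf_le hbddS ⟨A n, hSA n, rfl⟩)
    rintro _ ⟨B, hSB, rfl⟩
    obtain ⟨n, hBn⟩ := hcofinal B
    exact (ciInf_le hbddA n).trans (hF hSB hBn)
  exact hinf ▸ tendsto_atTop_ciInf (fun i j hij => hF (hSA i) (hA hij)) hbddA

end LocalFidelity

theorem local_fidelity_order_parameter_covering_limit_general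
    {ι : Type*} [DecidableEq ι] {d : ℕ}
    (ρ : ∀ A : Finset ι, Matrix (↥A → Fin d) (↥A → Fin d) ℂ)
    (hpsd : ∀ A, (ρ A).PosSemidef)
    (hcons : ∀ (A B : Finset ι) (h : A ⊆ B) (f f' : ↥A → Fin d),
      ρ A f f' = ∑ g : ↥(B \ A) → Fin d, ρ B (glue h f g) (glue h f' g))
    (S : Finset ι) (O : Matrix (↥S → Fin d) (↥S → Fin d) ℂ)
    (A : ℕ → Finset ι) (hchain : ∀ n, A n ⊆ A (n + 1)) (hS0 : S ⊆ A 0)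
    (hexh : ∀ i : ι, ∃ n, i ∈ A n) :
    Filter.Tendsto
      (fun n => fidelity (ρ (A n))
        (extendOp S O (A n) * ρ (A n) * (extendOp S O (A n))ᴴ))
      Filter.atTop
      (nhds (sInf {r : ℝ | ∃ B : Finset ι, S ⊆ B ∧
        r = fidelity (ρ B) (extendOp S O B * ρ B * (extendOp S O B)ᴴ)})) :=
  LocalFidelity.tendsto_sInf_of_antitone_of_exhausting
    (fun B => fidelity (ρ B) (extendOp S O B * ρ B * (extendOp S O B)ᴴ))
    (fun _ _ hSA hAB =>
      LocalFidelity.fidelity_extendOp_conj_le_of_subset hSA hAB O (hpsd _) (hcons _ _ hAB))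
    ⟨0, by rintro _ ⟨B, rfl⟩; exact LocalFidelity.fidelity_nonneg _ _⟩
    (monotone_nat_of_le_succ hchain) hS0 hexh

/-- **Existence and covering-independence of the local fidelity order parameter**
(Theorem 5): along any exhausting increasing sequence of finite regions containing `S`,
the one-point local fidelity correlator converges, to the infimum over all finite regions
containing `S`; in particular the limit does not depend on the chosen covering. -/
theorem local_fidelity_order_parameter_covering_limit
    {ι : Type*} [DecidableEq ι] {d : ℕ} (hd : 1 ≤ d)
    (ρ : ∀ A : Finset ι, Matrix (↥A → Fin d) (↥A → Fin d) ℂ)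
    (hpsd : ∀ A, (ρ A).PosSemidef) (htr : ∀ A, (ρ A).trace = 1)
    (hcons : ∀ (A B : Finset ι) (h : A ⊆ B) (f f' : ↥A → Fin d),
      ρ A f f' = ∑ g : ↥(B \ A) → Fin d, ρ B (glue h f g) (glue h f' g))
    (S : Finset ι) (O : Matrix (↥S → Fin d) (↥S → Fin d) ℂ)
    (A : ℕ → Finset ι) (hchain : ∀ n, A n ⊆ A (n + 1)) (hS0 : S ⊆ A 0)
    (hexh : ∀ i : ι, ∃ n, i ∈ A n) :
    Filter.Tendsto
      (fun n => fidelity (ρ (A n))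
        (extendOp S O (A n) * ρ (A n) * (extendOp S O (A n))ᴴ))
      Filter.atTop
      (nhds (sInf {r : ℝ | ∃ B : Finset ι, S ⊆ B ∧
        r = fidelity (ρ B) (extendOp S O B * ρ B * (extendOp S O B)ᴴ)})) :=
  local_fidelity_order_parameter_covering_limit_general ρ hpsd hcons S O A hchain hS0 hexh
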